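/- Let (A,⊥) be a commutative associative algebra with a Nijenhuis operator N (N(x)N(y) = N(N(x)y + xN(y) - N(xy))). Define a∘b = N(a)⊥b and a∨b = -N(a⊥b). Then (A,∘,∨) is an NS-commutative algebra: ∨ is commutative and, with a*b = a∘b + b∘a + a∨b, the identities a∘(b∘c) = (a*b)∘c and a*(b*c) = (a*b)*c hold. -/
import Mathlib


variable {F : Type*} [Field F] {A : Type*} [AddCommGroup A] [Module F A]

/-- The derived product `a*b = a∘b + b∘a + a∨b`. -/
def nsAst (circ vee : A →ₗ[F] A →ₗ[F] A) (a b : A) : A :=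
  circ a b + circ b a + vee a b

/-- a commutative associative algebra `(A,⊥)` with a Nijenhuis
operator `N` becomes an NS-commutative algebra via `a∘b = N(a)⊥b`,
`a∨b = -N(a⊥b)`: `∨` is commutative and, with `a*b = a∘b + b∘a + a∨b`,
`a∘(b∘c) = (a*b)∘c` and `a*(b*c) = (a*b)*c`. -/
theorem stmt_16 (perp : A →ₗ[F] A →ₗ[F] A)
    (hcomm : ∀ a b : A, perp a b = perp b a)
    (hassoc : ∀ a b c : A, perp (perp a b) c = perp a (perp b c))
    (N : A →ₗ[F] A)
    (hN : ∀ x y : A, perp (N x) (N y)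
      = N (perp (N x) y + perp x (N y) - N (perp x y))) :
    (∀ a b : A, (-(perp.compr₂ N)) a b = (-(perp.compr₂ N)) b a) ∧
    (∀ a b c : A, (perp ∘ₗ N) a ((perp ∘ₗ N) b c)
      = (perp ∘ₗ N) (nsAst (perp ∘ₗ N) (-(perp.compr₂ N)) a b) c) ∧
    (∀ a b c : A,
      nsAst (perp ∘ₗ N) (-(perp.compr₂ N)) a (nsAst (perp ∘ₗ N) (-(perp.compr₂ N)) b c)
      = nsAst (perp ∘ₗ N) (-(perp.compr₂ N)) (nsAst (perp ∘ₗ N) (-(perp.compr₂ N)) a b) c) := by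
  have hlc : ∀ a b c : A, perp a (perp b c) = perp b (perp a c) := by
    intro a b c; rw [← hassoc, hcomm a b, hassoc]
  -- unfolded form of the star product
  have hst : ∀ a b : A, nsAst (perp ∘ₗ N) (-(perp.compr₂ N)) a b
      = perp (N a) b + perp (N b) a - N (perp a b) := by
    intro a b
    simp [nsAst, sub_eq_add_neg]
  -- N is a morphism for the star product
  have hkey : ∀ a b : A, N (nsAst (perp ∘ₗ N) (-(perp.compr₂ N)) a b)
      = perp (N a) (N b) := by
    intro a b
    rw [hst, hN a b, hcomm (N b) a]
  refine ⟨?_, ?_, ?_⟩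
  · intro a b
    simp [hcomm a b]
  · intro a b c
    have : (perp ∘ₗ N) (nsAst (perp ∘ₗ N) (-(perp.compr₂ N)) a b) c
        = perp (N (nsAst (perp ∘ₗ N) (-(perp.compr₂ N)) a b)) c := rfl
    rw [this, hkey, hassoc]
    rfl
  · intro a b c
    rw [hst a (nsAst (perp ∘ₗ N) (-(perp.compr₂ N)) b c),
      hst (nsAst (perp ∘ₗ N) (-(perp.compr₂ N)) a b) c,
      hkey b c, hkey a b, hst b c, hst a b]
    simp only [map_add, map_sub, map_neg, LinearMap.add_apply, LinearMap.sub_apply, LinearMap.neg_apply]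
    rw [hN a (perp b c), hN c (perp a b)]
    simp only [map_add, map_sub, map_neg, LinearMap.add_apply, LinearMap.sub_apply, LinearMap.neg_apply]
    simp only [hassoc, hlc, hcomm]
    abel
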